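/- Let C be a cocomplete category with all pullbacks in which coproducts commute with pullbacks (i.e. for any family B_α and any morphism D → E with E = ∐_α B_α, the canonical map ∐_α (B_α ×_E D) → (∐_α B_α) ×_E D is an isomorphism). Let S = ⟨{f_α : A_α → X}_{α∈A}⟩ be the sieve generated by a family of morphisms and let T = ⟨{∐ f_α : ∐_{α∈A} A_α → X}⟩ be the sieve generated by the induced morphism from the coproduct. Then S is a colim sieve if and only if T is a colim sieve, and S is a universal colim sieve if and only if T is a universal colim sieve. -/

import Mathlib

open CategoryTheory Limits

universe v u

namespace UCSTopology

variable {C : Type u} [Category.{v} C]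

/-- A sieve `S` on `X` is a *colim sieve* if the colimit of the forgetful diagram
`U : S → C` exists and the canonical map `colim U → X` is an isomorphism, i.e. the
canonical cocone on the diagram of the sieve with vertex `X` is a colimit cocone. -/
def ColimSieve {X : C} (S : Sieve X) : Prop :=
  Nonempty (IsColimit (S : Presieve X).cocone)

/-- A sieve `S` on `X` is a *universal colim sieve* if for every morphism `f : Y ⟶ X`
the pullback sieve `f*S` is a colim sieve on `Y`. -/
def UniversalColimSieve {X : C} (S : Sieve X) : Prop :=
  ∀ ⦃Y : C⦄ (f : Y ⟶ X), ColimSieve (S.pullback f)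

/-- `ColimSieve` is definitionally `Sieve.EffectiveEpimorphic`. -/
theorem colimSieve_iff_effectiveEpimorphic {X : C} (S : Sieve X) :
    ColimSieve S ↔ S.EffectiveEpimorphic := Iff.rfl

/-- Under the stability hypothesis, the canonical comparison map out of the coproduct of
pullbacks is an epimorphism (in the variance used by mathlib's
`effectiveEpiFamilyStructOfEffectiveEpiDesc`). -/
theorem epi_desc_pullback_fst [HasColimits C] [HasPullbacks C]
    (hstable : ∀ {ι : Type v} (B : ι → C) (D : C) (f : D ⟶ ∐ B),
      IsIso (Sigma.desc fun i => pullback.snd (Sigma.ι B i) f))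
    {ι : Type v} (B : ι → C) {D : C} (g : D ⟶ ∐ B) :
    Epi (Sigma.desc fun i => pullback.fst g (Sigma.ι B i)) := by
  haveI := hstable B D g
  have h : (Sigma.desc fun i => pullback.fst g (Sigma.ι B i)) =
      (Limits.Sigma.map fun i => (pullbackSymmetry g (Sigma.ι B i)).hom) ≫
        (Sigma.desc fun i => pullback.snd (Sigma.ι B i) g) := by
    ext i
    simp
  rw [h]
  exact epi_comp _ _

/-- The key reduction: a family is effective epimorphic iff the induced map from the
coproduct is an effective epi. -/
theorem effectiveEpiFamily_iff_effectiveEpi_desc [HasColimits C] [HasPullbacks C]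
    (hstable : ∀ {ι : Type v} (B : ι → C) (D : C) (f : D ⟶ ∐ B),
      IsIso (Sigma.desc fun i => pullback.snd (Sigma.ι B i) f))
    {ι : Type v} {X : C} (A : ι → C) (f : ∀ i, A i ⟶ X) :
    EffectiveEpiFamily A f ↔ EffectiveEpi (Sigma.desc f) := by
  constructor
  · intro h
    infer_instance
  · intro h
    haveI : ∀ {Z : C} (g : Z ⟶ ∐ A),
        Epi (Sigma.desc fun a => pullback.fst g (Sigma.ι A a)) :=
      fun {Z} g => epi_desc_pullback_fst hstable A g
    exact ⟨⟨effectiveEpiFamilyStructOfEffectiveEpiDesc A f⟩⟩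

/-- Two morphisms which factor through each other generate the same sieve. -/
theorem generate_singleton_eq_of_factors {X P Q : C} {p : P ⟶ X} {q : Q ⟶ X}
    (u : P ⟶ Q) (v : Q ⟶ P) (hu : u ≫ q = p) (hv : v ≫ p = q) :
    Sieve.generate (Presieve.singleton p) = Sieve.generate (Presieve.singleton q) := by
  ext Y g
  constructor
  · rintro ⟨Z, h, l, hl, rfl⟩
    cases hl
    exact ⟨Q, h ≫ u, q, Presieve.singleton.mk, by simp [hu]⟩
  · rintro ⟨Z, h, l, hl, rfl⟩
    cases hl
    exact ⟨P, h ≫ v, p, Presieve.singleton.mk, by simp [hv]⟩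

/-- Two morphisms which factor through each other are simultaneously effective epis. -/
theorem effectiveEpi_iff_of_factors {X P Q : C} {p : P ⟶ X} {q : Q ⟶ X}
    (u : P ⟶ Q) (v : Q ⟶ P) (hu : u ≫ q = p) (hv : v ≫ p = q) :
    EffectiveEpi p ↔ EffectiveEpi q :=
  (Sieve.effectiveEpimorphic_singleton p).symm.trans
    ((iff_of_eq (congrArg Sieve.EffectiveEpimorphic
      (generate_singleton_eq_of_factors u v hu hv))).trans
        (Sieve.effectiveEpimorphic_singleton q))

/-- **Proposition (reducing the generating set of a sieve).**
Let `C` be a cocomplete category with pullbacks in which coproducts commute with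
pullbacks.  For a family `fᵢ : Aᵢ ⟶ X`, the sieve `S = ⟨{fᵢ}⟩` generated by the family
is a colim sieve iff the sieve `T = ⟨{∐ fᵢ : ∐ Aᵢ ⟶ X}⟩` generated by the induced map
from the coproduct is a colim sieve, and `S` is a universal colim sieve iff `T` is. -/
theorem generate_family_colimSieve_iff_generate_coproduct
    [HasColimits C] [HasPullbacks C]
    (hstable : ∀ {ι : Type v} (B : ι → C) (D : C) (f : D ⟶ ∐ B),
      IsIso (Sigma.desc fun i => pullback.snd (Sigma.ι B i) f))
    {ι : Type v} {X : C} (A : ι → C) (f : ∀ i, A i ⟶ X) :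
    (ColimSieve (Sieve.generate (Presieve.ofArrows A f)) ↔
      ColimSieve (Sieve.generate (Presieve.singleton (Sigma.desc f)))) ∧
    (UniversalColimSieve (Sieve.generate (Presieve.ofArrows A f)) ↔
      UniversalColimSieve (Sieve.generate (Presieve.singleton (Sigma.desc f)))) := by
  have main : ∀ {Y : C} (A' : ι → C) (f' : ∀ i, A' i ⟶ Y),
      ColimSieve (Sieve.generate (Presieve.ofArrows A' f')) ↔
        EffectiveEpi (Sigma.desc f') := fun A' f' =>
    (Sieve.effectiveEpimorphic_family A' f').trans
      (effectiveEpiFamily_iff_effectiveEpi_desc hstable A' f')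
  have single : ∀ {Y Z : C} (g : Z ⟶ Y),
      ColimSieve (Sieve.generate (Presieve.singleton g)) ↔ EffectiveEpi g := fun g =>
    Sieve.effectiveEpimorphic_singleton g
  have hpull : ∀ {Y : C} (α : Y ⟶ X),
      ColimSieve ((Sieve.generate (Presieve.ofArrows A f)).pullback α) ↔
        ColimSieve ((Sieve.generate (Presieve.singleton (Sigma.desc f))).pullback α) := by
    intro Y α
    rw [← Sieve.pullbackArrows_comm, ← Presieve.ofArrows_pullback,
      ← Sieve.pullbackArrows_comm α (Presieve.singleton (Sigma.desc f)),
      Presieve.pullback_singleton]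
    refine (main _ _).trans (Iff.trans ?_ (single _).symm)
    -- EffectiveEpi (Sigma.desc fun i => pullback.snd (f i) α) ↔
    --   EffectiveEpi (pullback.snd (Sigma.desc f) α)
    set P := pullback (Sigma.desc f) α with hP
    set g : P ⟶ ∐ A := pullback.fst (Sigma.desc f) α with hg
    haveI := hstable A P g
    refine effectiveEpi_iff_of_factors
      (Sigma.desc fun i => pullback.lift (pullback.fst (f i) α ≫ Sigma.ι A i)
        (pullback.snd (f i) α) (by simp [pullback.condition]))
      (inv (Sigma.desc fun i => pullback.snd (Sigma.ι A i) g) ≫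
        Sigma.desc fun i =>
          (pullback.lift (pullback.fst (Sigma.ι A i) g)
            (pullback.snd (Sigma.ι A i) g ≫ pullback.snd (Sigma.desc f) α)
            (by
              rw [Category.assoc]
              calc pullback.fst (Sigma.ι A i) g ≫ f i
                  = pullback.fst (Sigma.ι A i) g ≫ Sigma.ι A i ≫ Sigma.desc f := by simp
                _ = (pullback.snd (Sigma.ι A i) g ≫ g) ≫ Sigma.desc f := by
                    rw [← Category.assoc, pullback.condition]
                _ = pullback.snd (Sigma.ι A i) g ≫ pullback.snd (Sigma.desc f) α ≫ α := by
                    exact (Category.assoc _ _ _).trans (congrArg (pullback.snd (Sigma.ι A i) g ≫ ·) (pullback.condition (f := Sigma.desc f) (g := α))))) ≫ Sigma.ι (fun i => pullback (f i) α) i)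
      ?_ ?_
    · ext i
      simp
      exact pullback.lift_snd _ _ _
    · rw [Category.assoc, IsIso.inv_comp_eq]
      ext i
      simp
      exact pullback.lift_snd _ _ _
  refine ⟨(main A f).trans (single (Sigma.desc f)).symm, ?_⟩
  exact ⟨fun H Y α => (hpull α).mp (H α), fun H Y α => (hpull α).mpr (H α)⟩

end UCSTopology
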